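/- arXiv:1207.6708 — 9 statements merged into one kernel-verified Lean document; each statement's English description precedes it below -/
import Mathlib

section
/- Every continuous left unit operation λ:S→S on a right-uniformizable topological semigroup S is dicontinuous. Consequently, every right-uniformizable topological left unosemigroup is ditopological. -/
open Topology

/-!
Since `z = l z * z`, right translation by `z` moves any `w` close to `l z` to a point `w * z`
close to `z`, uniformly in `z` by right-uniformizability. So if `l z` and `w` both lie near
`l x` and `w * z` lies near `x`, then `z` lies near `x`.
-/

/-- Dicontinuity of a left unit operation `l` at `x`:
for every neighborhood `O` of `x` there are a neighborhood `U` of `x` and a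
neighborhood `W` of `l x` in the subspace `l(S)` such that
`(W ⟍ U) ∩ l⁻¹(W) ⊆ O`, where `W ⟍ U = {z | ∃ w ∈ W, w * z ∈ U}`. -/
def LeftDicontAt {S : Type*} [TopologicalSpace S] (mul : S → S → S) (l : S → S) (x : S) : Prop :=
  ∀ O ∈ 𝓝 x, ∃ U ∈ 𝓝 x, ∃ W ∈ 𝓝[Set.range l] (l x),
    W ⊆ Set.range l ∧ {z | l z ∈ W ∧ ∃ w ∈ W, mul w z ∈ U} ⊆ O

/-- Dicontinuity of a right unit operation `r` at `x`. -/
def RightDicontAt {S : Type*} [TopologicalSpace S] (mul : S → S → S) (r : S → S) (x : S) : Prop :=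
  ∀ O ∈ 𝓝 x, ∃ U ∈ 𝓝 x, ∃ W ∈ 𝓝[Set.range r] (r x),
    W ⊆ Set.range r ∧ {z | r z ∈ W ∧ ∃ w ∈ W, mul z w ∈ U} ⊆ O

open Set SetRel UniformSpace

theorem uniformEquicontinuous_mul_right_of_forall {S : Type*} [UniformSpace S] [Mul S]
    (hru : ∀ U ∈ uniformity S, ∃ V ∈ uniformity S,
      ∀ x y z : S, (x, z) ∈ V → (x * y, z * y) ∈ U) :
    UniformEquicontinuous fun y x : S => x * y := by
  intro U hU
  obtain ⟨V, hV, hVU⟩ := hru U hU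
  exact Filter.mem_of_superset hV fun p hp y => hVU p.1 y p.2 hp

theorem leftDicontAt_of_uniformEquicontinuous_mul_right {S : Type*} [UniformSpace S] [Mul S]
    (hS : UniformEquicontinuous fun y x : S => x * y) {l : S → S} (hunit : ∀ x, l x * x = x)
    (x : S) : LeftDicontAt (· * ·) l x := by
  intro O hO
  obtain ⟨E, hE, hEO⟩ := UniformSpace.mem_nhds_iff.mp hO
  obtain ⟨E₀, hE₀, hE₀E⟩ := comp_mem_uniformity_sets hE
  obtain ⟨V, hV, _, hVE₀⟩ := comp_symm_mem_uniformity_sets (hS E₀ hE₀)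
  refine ⟨ball x E₀, ball_mem_nhds x hE₀, range l ∩ ball (l x) V,
    inter_mem_nhdsWithin _ (ball_mem_nhds _ hV), inter_subset_left, ?_⟩
  rintro z ⟨⟨-, hlz⟩, w, ⟨-, hw⟩, hwz⟩
  have hwlz : (w, l z) ∈ V ○ V := ⟨l x, SetRel.symm V hw, hlz⟩
  have hclose : (w * z, z) ∈ E₀ := by
    simpa only [hunit z] using hVE₀ hwlz z
  exact hEO (hE₀E ⟨w * z, hwz, hclose⟩)

theorem rightUniformizable_left_unosemigroup_ditopological_general {S : Type*} [UniformSpace S] [Mul S]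
    (hru : ∀ U ∈ uniformity S, ∃ V ∈ uniformity S,
      ∀ x y z : S, (x, z) ∈ V → (x * y, z * y) ∈ U)
    (l : S → S)
    (hunit : ∀ x : S, l x * x = x) :
    ∀ x : S, LeftDicontAt (· * ·) l x :=
  leftDicontAt_of_uniformEquicontinuous_mul_right
    (uniformEquicontinuous_mul_right_of_forall hru) hunit

/-- Every continuous left unit operation on a right-uniformizable topological semigroup
is dicontinuous; hence every right-uniformizable topological left unosemigroup is
ditopological. -/
theorem rightUniformizable_left_unosemigroup_ditopological {S : Type*} [UniformSpace S] [Mul S]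
    (hassoc : ∀ a b c : S, a * b * c = a * (b * c))
    (hmul : Continuous fun p : S × S => p.1 * p.2)
    (hru : ∀ U ∈ uniformity S, ∃ V ∈ uniformity S,
      ∀ x y z : S, (x, z) ∈ V → (x * y, z * y) ∈ U)
    (l : S → S) (hl : Continuous l)
    (hunit : ∀ x : S, l x * x = x) :
    ∀ x : S, LeftDicontAt (· * ·) l x :=
  rightUniformizable_left_unosemigroup_ditopological_general hru l hunit
end

section
/- Every continuous right unit operation ρ:S→S on a left-uniformizable topological semigroup S is dicontinuous. Consequently, every left-uniformizable topological right unosemigroup is ditopological. -/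
open Topology

open Uniformity Set UniformSpace

/-!
Given a neighborhood `ball x F` of `x`, choose a symmetric entourage `F'` with `F' ○ F' ⊆ F`
and, by left uniformity, an entourage `V` such that `w` being `V`-close to `r z` makes
`z * w` `F'`-close to `z * r z = z`. If `r z` and `w` both lie in a small ball around `r x`,
then they are `V`-close, so `z * w ∈ ball x F'` forces `z ∈ ball x F`.
-/

lemma exists_mem_uniformity_mul_right_unit {S : Type*} [UniformSpace S] [Mul S]
    (hlu : ∀ U ∈ 𝓤 S, ∃ V ∈ 𝓤 S, ∀ x y z : S, (y, z) ∈ V → (x * y, x * z) ∈ U)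
    {r : S → S} (hunit : ∀ x : S, x * r x = x) {U : Set (S × S)} (hU : U ∈ 𝓤 S) :
    ∃ V ∈ 𝓤 S, ∀ z w : S, (w, r z) ∈ V → (z * w, z) ∈ U := by
  obtain ⟨V, hV, hVmul⟩ := hlu U hU
  refine ⟨V, hV, fun z w hwz => ?_⟩
  simpa only [hunit z] using hVmul z w (r z) hwz

theorem leftUniformizable_right_unosemigroup_ditopological_general {S : Type*} [UniformSpace S] [Mul S]
    (hlu : ∀ U ∈ uniformity S, ∃ V ∈ uniformity S,
      ∀ x y z : S, (y, z) ∈ V → (x * y, x * z) ∈ U)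
    (r : S → S)
    (hunit : ∀ x : S, x * r x = x) :
    ∀ x : S, RightDicontAt (· * ·) r x := by
  intro x O hO
  obtain ⟨F, hF, hFO⟩ := UniformSpace.mem_nhds_iff.1 hO
  obtain ⟨F', hF', hF'symm, hF'comp⟩ := comp_symm_mem_uniformity_sets hF
  obtain ⟨V, hV, hVunit⟩ := exists_mem_uniformity_mul_right_unit hlu hunit hF'
  obtain ⟨V', hV', hV'symm, hV'comp⟩ := comp_symm_mem_uniformity_sets hV
  refine ⟨ball x F', ball_mem_nhds x hF', ball (r x) V' ∩ range r,
    Filter.inter_mem (mem_nhdsWithin_of_mem_nhds (ball_mem_nhds _ hV')) self_mem_nhdsWithin,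
    inter_subset_right, ?_⟩
  rintro z ⟨⟨hrz, -⟩, w, ⟨hw, -⟩, hzw⟩
  have hw_rz : (w, r z) ∈ V := hV'comp ⟨r x, hV'symm.symm _ _ hw, hrz⟩
  exact hFO (hF'comp ⟨z * w, hzw, hVunit z w hw_rz⟩)

/-- Every continuous right unit operation on a left-uniformizable topological semigroup
is dicontinuous; hence every left-uniformizable topological right unosemigroup is
ditopological. -/
theorem leftUniformizable_right_unosemigroup_ditopological {S : Type*} [UniformSpace S] [Mul S]
    (hassoc : ∀ a b c : S, a * b * c = a * (b * c))
    (hmul : Continuous fun p : S × S => p.1 * p.2)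
    (hlu : ∀ U ∈ uniformity S, ∃ V ∈ uniformity S,
      ∀ x y z : S, (y, z) ∈ V → (x * y, x * z) ∈ U)
    (r : S → S) (hr : Continuous r)
    (hunit : ∀ x : S, x * r x = x) :
    ∀ x : S, RightDicontAt (· * ·) r x :=
  leftUniformizable_right_unosemigroup_ditopological_general hlu r hunit
end

section
/- Every compact Hausdorff topological unosemigroup (S,λ,ρ) is ditopological. -/
/-! A compact Hausdorff space carries a unique uniformity inducing its topology, and a continuous
multiplication is uniformly continuous for it; in particular the right translations `a ↦ a * z`
are uniformly equicontinuous. Hence if `w` is uniformly close to `l z`, then `w * z` is uniformly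
close to `l z * z = z`, so `w * z` close to `x` forces `z` close to `x`. The right-hand condition
is the left-hand one for the opposite multiplication. -/

open Topology

section UniformMul

variable {S : Type*} [UniformSpace S] {mul : S → S → S}

theorem UniformContinuous.uniformEquicontinuous_mul_right
    (hmul : UniformContinuous fun p : S × S => mul p.1 p.2) :
    UniformEquicontinuous fun z a => mul a z := by
  intro V hV
  obtain ⟨D₁, hD₁, D₂, hD₂, hD⟩ :=
    Filter.mem_prod_iff.1 (uniformity_prod_eq_prod (α := S) (β := S) ▸ hmul hV)
  filter_upwards [hD₁] with p hp z
  exact hD (Set.mk_mem_prod hp (refl_mem_uniformity hD₂ : (z, z) ∈ D₂))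

theorem leftDicontAt_of_uniformContinuous
    (hmul : UniformContinuous fun p : S × S => mul p.1 p.2)
    {l : S → S} (hl : ∀ z, mul (l z) z = z) (x : S) : LeftDicontAt mul l x := by
  intro O hO
  obtain ⟨W, hW, hWO⟩ := UniformSpace.mem_nhds_iff.1 hO
  obtain ⟨V, hV, hVW⟩ := comp_mem_uniformity_sets hW
  obtain ⟨D, hD, hDV⟩ := Filter.eventually_iff_exists_mem.1
    (hmul.uniformEquicontinuous_mul_right V hV)
  obtain ⟨E, hE, hEsymm, hED⟩ := comp_symm_mem_uniformity_sets hD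
  refine ⟨UniformSpace.ball x V, UniformSpace.ball_mem_nhds x hV,
    UniformSpace.ball (l x) E ∩ Set.range l,
    Filter.inter_mem (nhdsWithin_le_nhds (UniformSpace.ball_mem_nhds _ hE)) self_mem_nhdsWithin,
    Set.inter_subset_right, ?_⟩
  rintro z ⟨hz, w, hw, hwz⟩
  have hwl : (w, l z) ∈ D := hED ⟨l x, hEsymm.symm _ _ hw.1, hz.1⟩
  have hz' : (mul w z, mul (l z) z) ∈ V := hDV _ hwl z
  rw [hl z] at hz'
  exact hWO (hVW ⟨mul w z, hwz, hz'⟩)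

theorem rightDicontAt_of_uniformContinuous
    (hmul : UniformContinuous fun p : S × S => mul p.1 p.2)
    {r : S → S} (hr : ∀ z, mul z (r z) = z) (x : S) : RightDicontAt mul r x :=
  leftDicontAt_of_uniformContinuous (mul := Function.swap mul)
    (hmul.comp uniformContinuous_swap) hr x

end UniformMul

theorem compact_hausdorff_unosemigroup_ditopological_general {S : Type*} [TopologicalSpace S]
    [CompactSpace S] [T2Space S] [Mul S]
    (hmul : Continuous fun p : S × S => p.1 * p.2)
    (l r : S → S)
    (hlunit : ∀ x : S, l x * x = x)
    (hrunit : ∀ x : S, x * r x = x) :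
    ∀ x : S, LeftDicontAt (· * ·) l x ∧ RightDicontAt (· * ·) r x := by
  let _ : UniformSpace S := uniformSpaceOfCompactR1
  have hmul' := CompactSpace.uniformContinuous_of_continuous hmul
  exact fun x => ⟨leftDicontAt_of_uniformContinuous hmul' hlunit x,
    rightDicontAt_of_uniformContinuous hmul' hrunit x⟩

/-- Every compact Hausdorff topological unosemigroup is ditopological. -/
theorem compact_hausdorff_unosemigroup_ditopological {S : Type*} [TopologicalSpace S]
    [CompactSpace S] [T2Space S] [Mul S]
    (hassoc : ∀ a b c : S, a * b * c = a * (b * c))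
    (hmul : Continuous fun p : S × S => p.1 * p.2)
    (l r : S → S) (hl : Continuous l) (hr : Continuous r)
    (hlunit : ∀ x : S, l x * x = x)
    (hrunit : ∀ x : S, x * r x = x) :
    ∀ x : S, LeftDicontAt (· * ·) l x ∧ RightDicontAt (· * ·) r x :=
  compact_hausdorff_unosemigroup_ditopological_general hmul l r hlunit hrunit
end

section
/- Let T={0}∪{1/n : n∈ℕ} be the convergent-sequence semilattice with xy=x if x=y and xy=0 otherwise, H a two-element group with identity e and non-identity h, and S=T×H with the topology inducing the usual compact topology on T×{e} and the discrete topology on T×{h}. Then S is a topological inverse semigroup whose canonical left unit operation λ:x↦xx⁻¹ is not dicontinuous at the point (0,h). -/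
open Topology

/-- The convergent sequence `{0} ∪ {1/(n+1) : n ∈ ℕ}` in `ℝ`. -/
def Tset : Set ℝ := {0} ∪ {x : ℝ | ∃ n : ℕ, x = 1 / (n + 1)}

/-- The semilattice operation on `T`: `x * y = x` if `x = y`, and `0` otherwise. -/
noncomputable def tMul (x y : ↥Tset) : ↥Tset :=
  open Classical in if x = y then x else ⟨0, Or.inl rfl⟩

/-- Multiplication of `S = T × H`, where `H` is the two-element group `Bool` (with `xor`). -/
noncomputable def sMul (p q : ↥Tset × Bool) : ↥Tset × Bool :=
  (tMul p.1 q.1, xor p.2 q.2)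

/-- The inversion of `S = T × H` (every element of `H = Bool` is its own inverse). -/
def sInv (p : ↥Tset × Bool) : ↥Tset × Bool := p

/-- The canonical left unit operation `λ : x ↦ x·x⁻¹` on `S`, i.e. `(t,g) ↦ (t,e)`. -/
noncomputable def sLambda (p : ↥Tset × Bool) : ↥Tset × Bool := sMul p (sInv p)

/-- The topology on `S = T × H` inducing the original compact topology on `T × {e}`
and the discrete topology on `T × {h}` (where `e = false`, `h = true`). -/
def sTop : TopologicalSpace (↥Tset × Bool) :=
  TopologicalSpace.coinduced (fun t : ↥Tset => (t, false)) inferInstance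

/-!
Every point of `T` other than `0` is isolated, so the semilattice operation of `T` is
continuous, and it is locally constant in each variable separately. Gluing a compact copy
`T × {e}` to a discrete copy `T × {h}` keeps the multiplication continuous, because a product
that lands in the discrete copy has exactly one factor there and the other factor can only move
within the compact copy, where the product is locally constant.

Dicontinuity fails at `x = (0, h)` because `x` is isolated while `λ x = (0, e)` is a limit of
the idempotents `(1/(n+1), e)`: for `z = (1/(n+1), h)` we have `λ z = (1/(n+1), e)` and
`(0, e) z = x`, yet `z ≠ x`.
-/

open Filter Set

theorem not_leftDicontAt_of_isOpen_singleton {S : Type*} [TopologicalSpace S]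
    {mul : S → S → S} {l : S → S} {x : S} (hx : IsOpen {x})
    (h : ∀ W ∈ 𝓝[range l] (l x), ∃ z ≠ x, l z ∈ W ∧ mul (l x) z = x) :
    ¬ LeftDicontAt mul l x := by
  intro hdicont
  obtain ⟨U, hU, W, hW, -, hsub⟩ := hdicont {x} (hx.mem_nhds rfl)
  obtain ⟨z, hzx, hzW, hmul⟩ := h W hW
  have hxW : l x ∈ W := mem_of_mem_nhdsWithin (mem_range_self x) hW
  exact hzx (hsub ⟨hzW, l x, hxW, hmul.symm ▸ mem_of_mem_nhds hU⟩)

section FlatMeet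

variable {X : Type*}

/-- The meet of the flat order on `X` with bottom `z`. -/
def flatMeet [DecidableEq X] (z x y : X) : X := if x = y then x else z

variable [DecidableEq X] {z : X}

theorem flatMeet_self (x : X) : flatMeet z x x = x := if_pos rfl

theorem flatMeet_of_ne {x y : X} (h : x ≠ y) : flatMeet z x y = z := if_neg h

theorem flatMeet_eq_left_or_eq_bot (x y : X) : flatMeet z x y = x ∨ flatMeet z x y = z := by
  by_cases h : x = y
  · subst h; exact .inl (flatMeet_self x)
  · exact .inr (flatMeet_of_ne h)

theorem flatMeet_bot_left (x : X) : flatMeet z z x = z := by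
  rcases flatMeet_eq_left_or_eq_bot (z := z) z x with h | h <;> exact h

theorem flatMeet_comm (x y : X) : flatMeet z x y = flatMeet z y x := by
  by_cases h : x = y
  · rw [h]
  · rw [flatMeet_of_ne h, flatMeet_of_ne (Ne.symm h)]

theorem flatMeet_bot_right (x : X) : flatMeet z x z = z := by
  rw [flatMeet_comm, flatMeet_bot_left]

theorem flatMeet_assoc (x y w : X) :
    flatMeet z (flatMeet z x y) w = flatMeet z x (flatMeet z y w) := by
  by_cases hxy : x = y
  · subst hxy
    by_cases hxw : x = w
    · subst hxw; simp only [flatMeet_self]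
    · rw [flatMeet_self, flatMeet_of_ne hxw, flatMeet_bot_right]
  · rw [flatMeet_of_ne hxy, flatMeet_bot_left]
    by_cases hyw : y = w
    · subst hyw; rw [flatMeet_self, flatMeet_of_ne hxy]
    · rw [flatMeet_of_ne hyw, flatMeet_bot_right]

variable [TopologicalSpace X] [T1Space X]

theorem eventually_flatMeet_left_eq (hz : ∀ x ≠ z, IsOpen {x}) (s t : X) :
    ∀ᶠ u in 𝓝 s, flatMeet z u t = flatMeet z s t := by
  by_cases hst : s = t
  · subst hst
    by_cases hs : s = z
    · subst hs
      exact .of_forall fun u => by rw [flatMeet_bot_right, flatMeet_self]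
    · filter_upwards [(hz s hs).mem_nhds rfl] with u hu
      rw [mem_singleton_iff.mp hu]
  · filter_upwards [isOpen_ne.mem_nhds hst] with u hu
    rw [flatMeet_of_ne hu, flatMeet_of_ne hst]

theorem eventually_flatMeet_right_eq (hz : ∀ x ≠ z, IsOpen {x}) (s t : X) :
    ∀ᶠ v in 𝓝 t, flatMeet z s v = flatMeet z s t := by
  simpa only [flatMeet_comm s] using eventually_flatMeet_left_eq hz t s

theorem continuous_flatMeet (hz : ∀ x ≠ z, IsOpen {x}) :
    Continuous fun p : X × X => flatMeet z p.1 p.2 := by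
  rw [continuous_iff_continuousAt]
  rintro ⟨s, t⟩
  by_cases hs : s = z
  · by_cases ht : t = z
    · rw [hs, ht]
      -- `flatMeet z u v` is `u` or `z`, and both are close to `z`
      show Tendsto _ _ (𝓝 (flatMeet z z z))
      rw [flatMeet_self]
      intro N hN
      rw [mem_map]
      filter_upwards [continuousAt_fst.preimage_mem_nhds hN] with p hp
      show flatMeet z p.1 p.2 ∈ N
      rcases flatMeet_eq_left_or_eq_bot (z := z) p.1 p.2 with h | h <;> rw [h]
      exacts [hp, mem_of_mem_nhds hN]
    · refine tendsto_nhds_of_eventually_eq ?_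
      filter_upwards [(eventually_flatMeet_left_eq hz s t).prod_nhds ((hz t ht).mem_nhds rfl)]
        with p ⟨hp, hq⟩
      rw [mem_singleton_iff.mp hq, hp]
  · refine tendsto_nhds_of_eventually_eq ?_
    filter_upwards [Eventually.prod_nhds ((hz s hs).mem_nhds rfl)
      (eventually_flatMeet_right_eq hz s t)] with p ⟨hp, hq⟩
    rw [mem_singleton_iff.mp hp, hq]

end FlatMeet

def tZero : ↥Tset := ⟨0, Or.inl rfl⟩

noncomputable def tSeq (n : ℕ) : ↥Tset := ⟨1 / (n + 1), Or.inr ⟨n, rfl⟩⟩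

theorem tSeq_ne_zero (n : ℕ) : tSeq n ≠ tZero :=
  fun h => (Nat.one_div_pos_of_nat (α := ℝ)).ne' (congrArg Subtype.val h)

theorem tendsto_tSeq : Tendsto tSeq atTop (𝓝 tZero) :=
  tendsto_subtype_rng.mpr tendsto_one_div_add_atTop_nhds_zero_nat

theorem finite_Tset_inter_Ioi {ε : ℝ} (hε : 0 < ε) : (Tset ∩ Ioi ε).Finite := by
  have hfin : {n : ℕ | ε ≤ 1 / (n + 1)}.Finite := by
    have := tendsto_one_div_add_atTop_nhds_zero_nat.eventually (gt_mem_nhds hε)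
    simpa only [← Nat.cofinite_eq_atTop, eventually_cofinite, not_lt] using this
  refine (hfin.image fun n : ℕ => (1 / (n + 1) : ℝ)).subset ?_
  rintro x ⟨rfl | ⟨n, rfl⟩, hεx⟩
  · exact absurd (mem_Ioi.mp hεx) hε.not_gt
  · exact ⟨n, (mem_Ioi.mp hεx).le, rfl⟩

theorem isOpen_singleton_Tset {t : ↥Tset} (ht : t ≠ tZero) : IsOpen {t} := by
  have hpos : 0 < (t : ℝ) := by
    rcases t.2 with h | ⟨n, h⟩
    · exact absurd (Subtype.ext (mem_singleton_iff.mp h)) ht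
    · rw [h]; exact Nat.one_div_pos_of_nat
  refine isOpen_singleton_of_finite_mem_nhds t
    ((isOpen_Ioi.preimage continuous_subtype_val).mem_nhds (half_lt_self hpos)) ?_
  exact (finite_Tset_inter_Ioi (half_pos hpos)).preimage Subtype.val_injective.injOn
    |>.subset fun u hu => ⟨u.2, hu⟩

-- `tMul` is definitionally `flatMeet tZero`, so the `flatMeet` lemmas apply to it directly.
theorem sMul_assoc (p q r : ↥Tset × Bool) : sMul (sMul p q) r = sMul p (sMul q r) :=
  Prod.ext (flatMeet_assoc _ _ _) (Bool.xor_assoc _ _ _)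

theorem sMul_comm (p q : ↥Tset × Bool) : sMul p q = sMul q p :=
  Prod.ext (flatMeet_comm _ _) (Bool.xor_comm _ _)

theorem sLambda_apply (p : ↥Tset × Bool) : sLambda p = (p.1, false) :=
  Prod.ext (flatMeet_self _) (Bool.xor_self _)

theorem sMul_sMul_self_self (p : ↥Tset × Bool) : sMul (sMul p p) p = p := by
  rw [show sMul p p = (p.1, false) from sLambda_apply p]
  exact Prod.ext (flatMeet_self _) (Bool.false_xor _)

section GluedProduct

attribute [local instance] sTop

theorem isOpenEmbedding_mk_false : IsOpenEmbedding fun t : ↥Tset => (t, false) := by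
  refine .of_continuous_injective_isOpenMap continuous_coinduced_rng
    (fun _ _ h => congrArg Prod.fst h) fun V hV => ?_
  show IsOpen ((fun t : ↥Tset => (t, false)) ⁻¹' ((fun t => (t, false)) '' V))
  rwa [preimage_image_eq _ fun _ _ h => congrArg Prod.fst h]

theorem nhds_mk_false (t : ↥Tset) : 𝓝 (t, false) = map (·, false) (𝓝 t) :=
  (isOpenEmbedding_mk_false.map_nhds_eq t).symm

theorem isOpen_singleton_mk_true (t : ↥Tset) : IsOpen {(t, true)} := by
  show IsOpen ((fun t : ↥Tset => (t, false)) ⁻¹' {(t, true)})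
  simp only [preimage, mem_singleton_iff, Prod.mk.injEq, Bool.false_eq_true, and_false,
    ofPred_false, isOpen_empty]

theorem nhds_mk_true (t : ↥Tset) : 𝓝 (t, true) = pure (t, true) :=
  (isOpen_singleton_iff_nhds_eq_pure _).mp (isOpen_singleton_mk_true t)

theorem continuous_sMul :
    Continuous fun p : (↥Tset × Bool) × (↥Tset × Bool) => sMul p.1 p.2 := by
  rw [continuous_iff_continuousAt]
  rintro ⟨⟨s, a⟩, ⟨t, b⟩⟩
  have hT : ∀ t ≠ tZero, IsOpen {t} := fun _ => isOpen_singleton_Tset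
  rw [ContinuousAt, nhds_prod_eq]
  cases a <;> cases b <;>
    simp only [nhds_mk_false, nhds_mk_true, prod_map_map_eq, prod_pure, pure_prod,
      tendsto_map'_iff]
  · exact (isOpenEmbedding_mk_false.continuous.tendsto _).comp
      (nhds_prod_eq (x := s) (y := t) ▸ (continuous_flatMeet hT).tendsto (s, t))
  · exact tendsto_nhds_of_eventually_eq
      ((eventually_flatMeet_left_eq hT s t).mono fun u hu => Prod.ext hu rfl)
  · exact tendsto_nhds_of_eventually_eq
      ((eventually_flatMeet_right_eq hT s t).mono fun v hv => Prod.ext hv rfl)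
  · exact tendsto_pure_nhds _ _

theorem not_leftDicontAt_sLambda : ¬ LeftDicontAt sMul sLambda (tZero, true) := by
  refine not_leftDicontAt_of_isOpen_singleton (isOpen_singleton_mk_true tZero) fun W hW => ?_
  rw [sLambda_apply] at hW
  have hlim : Tendsto (fun n => (tSeq n, false)) atTop (𝓝[range sLambda] (tZero, false)) :=
    tendsto_nhdsWithin_iff.mpr ⟨(isOpenEmbedding_mk_false.continuous.tendsto _).comp tendsto_tSeq,
      .of_forall fun n => ⟨(tSeq n, false), sLambda_apply _⟩⟩
  obtain ⟨n, hn⟩ := (hlim.eventually hW).exists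
  refine ⟨(tSeq n, true), fun h => tSeq_ne_zero n (congrArg Prod.fst h), ?_, ?_⟩
  · rwa [sLambda_apply]
  · rw [sLambda_apply]
    exact Prod.ext (flatMeet_bot_left _) rfl

end GluedProduct

/-- The semigroup `S = T × H` with the above topology is a (commutative) topological
inverse semigroup, but its canonical left unit operation `λ : x ↦ x·x⁻¹` is not
dicontinuous at the point `(0, h)`. -/
theorem convergent_sequence_example_not_ditopological :
    (∀ p q r : ↥Tset × Bool, sMul (sMul p q) r = sMul p (sMul q r)) ∧
    (∀ p q : ↥Tset × Bool, sMul p q = sMul q p) ∧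
    (∀ p : ↥Tset × Bool, sMul (sMul p (sInv p)) p = p) ∧
    (∀ p : ↥Tset × Bool, sMul (sMul (sInv p) p) (sInv p) = sInv p) ∧
    (@Continuous ((↥Tset × Bool) × (↥Tset × Bool)) (↥Tset × Bool)
      (@instTopologicalSpaceProd _ _ sTop sTop) sTop (fun p => sMul p.1 p.2)) ∧
    (@Continuous (↥Tset × Bool) (↥Tset × Bool) sTop sTop sInv) ∧
    ¬ @LeftDicontAt (↥Tset × Bool) sTop sMul sLambda ((⟨0, Or.inl rfl⟩ : ↥Tset), true) :=
  ⟨sMul_assoc, sMul_comm, sMul_sMul_self_self, sMul_sMul_self_self, continuous_sMul,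
    @continuous_id _ sTop, not_leftDicontAt_sLambda⟩
end

section
/- If (S,λ) is a ditopological left unosemigroup and X⊆S is a subsemigroup with λ(X)⊆X, endowed with the subspace topology, then (X,λ|X) is a ditopological left unosemigroup. -/
open Topology

/-- Every subunosemigroup of a ditopological left unosemigroup is ditopological. -/
theorem subunosemigroup_ditopological {S : Type*} [TopologicalSpace S] [Mul S]
    (hassoc : ∀ a b c : S, a * b * c = a * (b * c))
    (hmul : Continuous fun p : S × S => p.1 * p.2)
    (l : S → S) (hl : Continuous l)
    (hunit : ∀ x : S, l x * x = x)
    (hdi : ∀ x : S, LeftDicontAt (· * ·) l x)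
    (X : Set S)
    (hXmul : ∀ a ∈ X, ∀ b ∈ X, a * b ∈ X)
    (hXl : ∀ a ∈ X, l a ∈ X) :
    ∀ x : X, LeftDicontAt
      (fun a b : X => (⟨a.1 * b.1, hXmul a.1 a.2 b.1 b.2⟩ : X))
      (fun a : X => (⟨l a.1, hXl a.1 a.2⟩ : X)) x := by
  intro x O hO
  set lX : X → X := fun a : X => (⟨l a.1, hXl a.1 a.2⟩ : X) with hlX
  obtain ⟨O', hO', hO'sub⟩ := (mem_nhds_subtype X x O).1 hO
  obtain ⟨U, hU, W, hW, hWr, hsub⟩ := hdi x.1 O' hO'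
  obtain ⟨u, hu_open, hxu, huW⟩ := mem_nhdsWithin.1 hW
  refine ⟨Subtype.val ⁻¹' U, (mem_nhds_subtype X x _).2 ⟨U, hU, subset_rfl⟩,
    (Subtype.val ⁻¹' u) ∩ Set.range lX, mem_nhdsWithin.2
      ⟨Subtype.val ⁻¹' u, hu_open.preimage continuous_subtype_val, hxu, subset_rfl⟩,
    Set.inter_subset_right, ?_⟩
  intro z ⟨⟨hz1, _⟩, w, ⟨hw1, hw2⟩, hwz⟩
  apply hO'sub
  apply hsub
  refine ⟨huW ⟨hz1, z.1, rfl⟩, w.1, huW ⟨hw1, ?_⟩, hwz⟩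
  obtain ⟨b, rfl⟩ := hw2
  exact ⟨b.1, rfl⟩
end

section
/- The Tychonoff product of a family of ditopological left unosemigroups (S_α,λ_α), α∈A, with coordinatewise multiplication and left unit operation λ((x_α)_α)=(λ_α(x_α))_α, is a ditopological left unosemigroup. -/
open Topology

/-- The Tychonoff product of ditopological left unosemigroups is a ditopological
left unosemigroup. -/
theorem product_ditopological {A : Type*} {S : A → Type*}
    [∀ a, TopologicalSpace (S a)] [∀ a, Mul (S a)]
    (hassoc : ∀ a, ∀ x y z : S a, x * y * z = x * (y * z))
    (hmul : ∀ a, Continuous fun p : S a × S a => p.1 * p.2)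
    (l : ∀ a, S a → S a) (hl : ∀ a, Continuous (l a))
    (hunit : ∀ a, ∀ x : S a, l a x * x = x)
    (hdi : ∀ a, ∀ x : S a, LeftDicontAt (· * ·) (l a) x) :
    ∀ x : (∀ a, S a), LeftDicontAt (· * ·) (fun y a => l a (y a)) x := by
  intro x O hO
  rw [nhds_pi, Filter.mem_pi] at hO
  obtain ⟨I, hI, t, ht, hsub⟩ := hO
  choose U hU W hW hWr hmain using fun a => hdi a (x a) (t a) (ht a)
  choose V hVopen hVmem hVW using fun a => mem_nhdsWithin.mp (hW a)
  set L : (∀ a, S a) → (∀ a, S a) := fun y a => l a (y a) with hL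
  refine ⟨I.pi U, set_pi_mem_nhds hI fun a _ => hU a,
    (I.pi W) ∩ Set.range L, ?_, Set.inter_subset_right, ?_⟩
  · refine mem_nhdsWithin.mpr ⟨I.pi V, isOpen_set_pi hI fun a _ => hVopen a,
      fun a _ => hVmem a, ?_⟩
    rintro w ⟨hwV, y, rfl⟩
    exact ⟨fun a ha => hVW a ⟨hwV a ha, y a, rfl⟩, y, rfl⟩
  · rintro z ⟨⟨hz, -⟩, w, ⟨hwW, -⟩, hwz⟩
    refine hsub fun a ha => hmain a ⟨hz a ha, w a, hwW a ha, hwz a ha⟩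
end

section
/- Let X,Y be topological left unosemigroups with left unit operations λ_X, λ_Y, and I⊆X a closed two-sided ideal with λ_X(I)⊆I. If (X,λ_X) and (Y,λ_Y) are ditopological, then the reduced product X×_I Y, with its natural left unit operation λ, is a ditopological left unosemigroup. -/
open Topology

/-- The equivalence relation on `X × Y` identifying `(x, y)` and `(x, y')` for `x ∈ I`:
the quotient is the reduced product `X ×_I Y = I ∪ ((X \ I) × Y)`. -/
def rpSetoid {X Y : Type*} (I : Set X) : Setoid (X × Y) where
  r p q := p.1 = q.1 ∧ (p.1 ∈ I ∨ p.2 = q.2)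
  iseqv := by
    constructor
    · exact fun p => ⟨rfl, Or.inr rfl⟩
    · rintro p q ⟨h1, h2⟩
      refine ⟨h1.symm, ?_⟩
      rcases h2 with h | h
      · exact Or.inl (h1 ▸ h)
      · exact Or.inr h.symm
    · rintro p q r ⟨h1, h2⟩ ⟨h3, h4⟩
      refine ⟨h1.trans h3, ?_⟩
      rcases h2 with h | h
      · exact Or.inl h
      · rcases h4 with h' | h'
        · exact Or.inl (h1.symm ▸ h')
        · exact Or.inr (h.trans h')

/-- The underlying set of the reduced product `X ×_I Y`. -/
def RP {X : Type*} (Y : Type*) (I : Set X) := Quotient (rpSetoid (X := X) (Y := Y) I)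

/-- The canonical projection `q : X × Y → X ×_I Y`. -/
def rpMk {X Y : Type*} (I : Set X) (p : X × Y) : RP Y I :=
  Quotient.mk (rpSetoid I) p

/-- The projection `π : X ×_I Y → X`. -/
def rpPi {X Y : Type*} (I : Set X) : RP Y I → X :=
  Quotient.lift Prod.fst (fun _ _ h => h.1)

/-- The multiplication of the reduced product `X ×_I Y` (the unique one making
`q : X × Y → X ×_I Y` a homomorphism). -/
def rpMul {X Y : Type*} [Mul X] [Mul Y] (I : Set X)
    (hI : ∀ a b : X, a ∈ I ∨ b ∈ I → a * b ∈ I) :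
    RP Y I → RP Y I → RP Y I :=
  Quotient.lift₂ (fun p q => rpMk I (p.1 * q.1, p.2 * q.2)) (by
    rintro p q p' q' ⟨h1, h2⟩ ⟨h3, h4⟩
    refine Quotient.sound ⟨by rw [h1, h3], ?_⟩
    by_cases hmem : p.1 * q.1 ∈ I
    · exact Or.inl hmem
    · refine Or.inr ?_
      have hp2 : p.2 = p'.2 := by
        rcases h2 with h | h
        · exact absurd (hI _ _ (Or.inl h)) hmem
        · exact h
      have hq2 : q.2 = q'.2 := by
        rcases h4 with h | h
        · exact absurd (hI _ _ (Or.inr h)) hmem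
        · exact h
      rw [hp2, hq2])

/-- The natural left unit operation on the reduced product `X ×_I Y`. -/
def rpL {X Y : Type*} (I : Set X) (lX : X → X) (lY : Y → Y)
    (hlI : ∀ x ∈ I, lX x ∈ I) : RP Y I → RP Y I :=
  Quotient.lift (fun p => rpMk I (lX p.1, lY p.2)) (by
    rintro p q ⟨h1, h2⟩
    refine Quotient.sound ⟨by rw [h1], ?_⟩
    rcases h2 with h | h
    · exact Or.inl (hlI _ h)
    · exact Or.inr (by rw [h]))

/-- The topology of the reduced product: the smallest topology making the inclusion
`(X \ I) × Y ↪ X ×_I Y` a topological embedding and the projection `π` continuous,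
i.e. the topology generated by images of open boxes `U × V` with `U ⊆ X \ I`
together with preimages `π⁻¹(O)` of open sets. -/
def rpTop {X Y : Type*} [TopologicalSpace X] [TopologicalSpace Y] (I : Set X) :
    TopologicalSpace (RP Y I) :=
  TopologicalSpace.generateFrom
    ({Z | ∃ (U : Set X) (V : Set Y), IsOpen U ∧ U ⊆ Iᶜ ∧ IsOpen V ∧
        Z = rpMk I '' (U ×ˢ V)} ∪
     {Z | ∃ O : Set X, IsOpen O ∧ Z = rpPi I ⁻¹' O})

/-!
At a point of `I`, the neighborhoods of `X ×_I Y` are the preimages under `π` of neighborhoods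
in `X`, and `π` is a continuous homomorphism intertwining `λ` and `λ_X`, so dicontinuity of
`λ_X` pulls back along `π`. At a point `(x, y)` with `x ∉ I` we also have `λ_X x ∉ I`, since
`λ_X x * x = x` and `I` is an ideal. The open set `(X \ I) × Y` contains both points, each of its
points is alone in its fiber under `q`, and `q` maps neighborhoods of them onto
neighborhoods; so dicontinuity of `λ_X × λ_Y` at `(x, y)` pushes forward along `q`.
-/

open Topology Filter Set

section LeftDicontAt

variable {S T : Type*} [TopologicalSpace S] [TopologicalSpace T]
  {mulS : S → S → S} {mulT : T → T → T} {l : S → S} {l' : T → T} {f : S → T}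

theorem LeftDicontAt.comap (hf : Continuous f) (hmul : ∀ a b, f (mulS a b) = mulT (f a) (f b))
    (hl : ∀ a, f (l a) = l' (f a)) {s : S} (hs : 𝓝 s = comap f (𝓝 (f s)))
    (h : LeftDicontAt mulT l' (f s)) : LeftDicontAt mulS l s := by
  intro O hO
  rw [hs] at hO
  obtain ⟨O', hO', hO'O⟩ := hO
  obtain ⟨U, hU, W, hW, -, hkey⟩ := h O' hO'
  have hmaps : MapsTo f (range l) (range l') := by
    rintro _ ⟨a, rfl⟩
    exact ⟨f a, (hl a).symm⟩
  have hW' : f ⁻¹' W ∈ 𝓝[range l] (l s) :=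
    hf.continuousWithinAt.tendsto_nhdsWithin hmaps (by rwa [hl])
  refine ⟨f ⁻¹' U, hf.continuousAt.preimage_mem_nhds hU, f ⁻¹' W ∩ range l,
    inter_mem hW' self_mem_nhdsWithin, inter_subset_right, ?_⟩
  rintro z ⟨⟨hlz, -⟩, w, ⟨hw, -⟩, hwz⟩
  exact hO'O (hkey ⟨by rwa [← hl], f w, hw, by rwa [← hmul]⟩)

theorem LeftDicontAt.map (hf : Function.Surjective f)
    (hmul : ∀ a b, f (mulS a b) = mulT (f a) (f b)) (hl : ∀ a, f (l a) = l' (f a))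
    {N : Set S} (hN : IsOpen N) (hfN : ∀ a ∈ N, ∀ b, f b = f a → b = a)
    (hnhds : ∀ a ∈ N, 𝓝 (f a) = map f (𝓝 a)) {s : S} (hs : s ∈ N) (hls : l s ∈ N)
    (h : LeftDicontAt mulS l s) : LeftDicontAt mulT l' (f s) := by
  have himage : ∀ a ∈ N, ∀ A ∈ 𝓝 a, f '' (A ∩ N) ∈ 𝓝 (f a) := fun a ha A hA => by
    rw [hnhds a ha, mem_map]
    exact mem_of_superset (inter_mem hA (hN.mem_nhds ha)) (subset_preimage_image f _)
  intro O hO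
  rw [hnhds s hs] at hO
  obtain ⟨U, hU, W, hW, hWl, hkey⟩ := h _ hO
  refine ⟨f '' (U ∩ N), himage s hs U hU, f '' (W ∩ N), ?_, ?_, ?_⟩
  · obtain ⟨A, hA, hAW⟩ := mem_nhdsWithin_iff_exists_mem_nhds_inter.1 hW
    rw [← hl, mem_nhdsWithin_iff_exists_mem_nhds_inter]
    refine ⟨f '' (A ∩ N), himage _ hls A hA, ?_⟩
    rintro _ ⟨⟨a, ⟨haA, haN⟩, rfl⟩, t, ht⟩
    obtain ⟨b, rfl⟩ := hf t
    have hab : l b = a := hfN a haN _ ((hl b).trans ht)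
    exact ⟨a, ⟨hAW ⟨haA, b, hab⟩, haN⟩, rfl⟩
  · rintro _ ⟨a, ⟨haW, -⟩, rfl⟩
    obtain ⟨b, rfl⟩ := hWl haW
    exact ⟨f b, (hl b).symm⟩
  · rintro z ⟨⟨v, ⟨hvW, hvN⟩, hv⟩, _, ⟨q, ⟨hqW, -⟩, rfl⟩,
      ⟨u, ⟨huU, huN⟩, hu⟩⟩
    obtain ⟨p, rfl⟩ := hf z
    have hlp : l p = v := hfN v hvN _ ((hl p).trans hv.symm)
    have hqp : mulS q p = u := hfN u huN _ ((hmul q p).trans hu.symm)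
    exact hkey ⟨hlp ▸ hvW, q, hqW, hqp ▸ huU⟩

end LeftDicontAt

theorem LeftDicontAt.prod {X Y : Type*} [TopologicalSpace X] [TopologicalSpace Y] [Mul X] [Mul Y]
    {lX : X → X} {lY : Y → Y} {x : X} {y : Y} (hx : LeftDicontAt (· * ·) lX x)
    (hy : LeftDicontAt (· * ·) lY y) : LeftDicontAt (· * ·) (Prod.map lX lY) (x, y) := by
  intro O hO
  obtain ⟨O₁, hO₁, O₂, hO₂, hO⟩ := mem_nhds_prod_iff.1 hO
  obtain ⟨U₁, hU₁, W₁, hW₁, hW₁l, hkey₁⟩ := hx O₁ hO₁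
  obtain ⟨U₂, hU₂, W₂, hW₂, hW₂l, hkey₂⟩ := hy O₂ hO₂
  refine ⟨U₁ ×ˢ U₂, prod_mem_nhds hU₁ hU₂, W₁ ×ˢ W₂, ?_, ?_, ?_⟩
  · rw [range_prodMap, Prod.map_apply, nhdsWithin_prod_eq]
    exact prod_mem_prod hW₁ hW₂
  · rw [range_prodMap]
    exact prod_mono hW₁l hW₂l
  · rintro ⟨a, b⟩ ⟨⟨hla, hlb⟩, ⟨c, d⟩, ⟨hc, hd⟩, hca, hdb⟩
    exact hO ⟨hkey₁ ⟨hla, c, hc, hca⟩, hkey₂ ⟨hlb, d, hd, hdb⟩⟩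

section ReducedProduct

variable {X Y : Type*} {I : Set X}

theorem rpMk_surjective : Function.Surjective (rpMk (Y := Y) I) :=
  Quotient.mk_surjective

theorem eq_of_rpMk_eq {p q : X × Y} (hq : q.1 ∉ I) (h : rpMk I p = rpMk I q) : p = q := by
  obtain ⟨h₁, h₂⟩ : p.1 = q.1 ∧ (p.1 ∈ I ∨ p.2 = q.2) := Quotient.exact h
  exact Prod.ext h₁ (h₂.resolve_left (h₁ ▸ hq))

theorem rpMk_preimage_image_prod {U : Set X} {V : Set Y} (hU : U ⊆ Iᶜ) :
    rpMk I ⁻¹' (rpMk I '' (U ×ˢ V)) = U ×ˢ V := by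
  refine Subset.antisymm ?_ (subset_preimage_image _ _)
  rintro p ⟨q, hq, hqp⟩
  rwa [eq_of_rpMk_eq (hU hq.1) hqp.symm]

theorem rpPi_rpMul [Mul X] [Mul Y] (hI : ∀ a b : X, a ∈ I ∨ b ∈ I → a * b ∈ I)
    (z w : RP Y I) : rpPi I (rpMul I hI z w) = rpPi I z * rpPi I w :=
  Quotient.inductionOn₂ z w fun _ _ => rfl

theorem rpPi_rpL {lX : X → X} {lY : Y → Y} (hlI : ∀ x ∈ I, lX x ∈ I) (z : RP Y I) :
    rpPi I (rpL I lX lY hlI z) = lX (rpPi I z) :=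
  Quotient.inductionOn z fun _ => rfl

variable [TopologicalSpace X] [TopologicalSpace Y]

local instance : TopologicalSpace (RP Y I) := rpTop I

theorem isOpen_rpMk_image_prod {U : Set X} {V : Set Y} (hU : IsOpen U) (hUI : U ⊆ Iᶜ)
    (hV : IsOpen V) : IsOpen (rpMk I '' (U ×ˢ V)) :=
  TopologicalSpace.isOpen_generateFrom_of_mem (Or.inl ⟨U, V, hU, hUI, hV, rfl⟩)

theorem continuous_rpPi : Continuous (rpPi (Y := Y) I) :=
  continuous_def.2 fun O hO => TopologicalSpace.isOpen_generateFrom_of_mem (Or.inr ⟨O, hO, rfl⟩)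

theorem continuous_rpMk : Continuous (rpMk (Y := Y) I) := by
  refine continuous_generateFrom_iff.2 ?_
  rintro _ (⟨U, V, hU, hUI, hV, rfl⟩ | ⟨O, hO, rfl⟩)
  · rw [rpMk_preimage_image_prod hUI]
    exact hU.prod hV
  · exact hO.preimage continuous_fst

theorem nhds_rpMk_of_mem {p : X × Y} (hp : p.1 ∈ I) :
    𝓝 (rpMk I p) = comap (rpPi I) (𝓝 p.1) := by
  refine le_antisymm (continuous_rpPi.tendsto _).le_comap ?_
  erw [TopologicalSpace.nhds_generateFrom]
  refine le_iInf₂ fun s ⟨hps, hs⟩ => le_principal_iff.2 ?_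
  rcases hs with ⟨U, V, -, hUI, -, rfl⟩ | ⟨O, hO, rfl⟩
  · rw [← mem_preimage, rpMk_preimage_image_prod hUI] at hps
    exact absurd hp (hUI hps.1)
  · exact preimage_mem_comap (hO.mem_nhds hps)

theorem nhds_rpMk_of_notMem (hIclosed : IsClosed I) {p : X × Y} (hp : p.1 ∉ I) :
    𝓝 (rpMk I p) = map (rpMk I) (𝓝 p) := by
  refine le_antisymm (fun B hB => ?_) (continuous_rpMk.tendsto p)
  have hN : Prod.fst ⁻¹' Iᶜ ∈ 𝓝 p :=
    (hIclosed.isOpen_compl.preimage continuous_fst).mem_nhds hp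
  obtain ⟨U, V, hU, hpU, hV, hpV, hUV⟩ := mem_nhds_prod_iff'.1 (inter_mem hB hN)
  have hUI : U ⊆ Iᶜ := fun x hx => (hUV (mk_mem_prod hx hpV)).2
  have hpUV : rpMk I p ∈ rpMk I '' (U ×ˢ V) := mem_image_of_mem _ ⟨hpU, hpV⟩
  exact mem_of_superset ((isOpen_rpMk_image_prod hU hUI hV).mem_nhds hpUV)
    (image_subset_iff.2 fun q hq => (hUV hq).1)

end ReducedProduct

theorem reduced_product_ditopological_general {X Y : Type*} [TopologicalSpace X] [TopologicalSpace Y]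
    [Mul X] [Mul Y]
    (lX : X → X) (hunitX : ∀ x : X, lX x * x = x)
    (lY : Y → Y)
    (hdiX : ∀ x : X, LeftDicontAt (· * ·) lX x)
    (hdiY : ∀ y : Y, LeftDicontAt (· * ·) lY y)
    (I : Set X) (hIclosed : IsClosed I)
    (hI : ∀ a b : X, a ∈ I ∨ b ∈ I → a * b ∈ I)
    (hlI : ∀ x ∈ I, lX x ∈ I) :
    ∀ z : RP Y I, @LeftDicontAt (RP Y I) (rpTop I) (rpMul I hI) (rpL I lX lY hlI) z := by
  let _ : TopologicalSpace (RP Y I) := rpTop I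
  intro z
  obtain ⟨p, rfl⟩ := rpMk_surjective z
  by_cases hp : p.1 ∈ I
  · exact (hdiX p.1).comap continuous_rpPi (rpPi_rpMul hI) (rpPi_rpL hlI) (nhds_rpMk_of_mem hp)
  · have hlp : lX p.1 ∉ I := fun h => hp (hunitX p.1 ▸ hI _ _ (Or.inl h))
    exact ((hdiX p.1).prod (hdiY p.2)).map rpMk_surjective (fun _ _ => rfl) (fun _ => rfl)
      (hIclosed.isOpen_compl.preimage continuous_fst) (fun a ha _ => eq_of_rpMk_eq ha)
      (fun a ha => nhds_rpMk_of_notMem hIclosed ha) hp hlp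

/-- The reduced product of ditopological left unosemigroups over a closed two-sided
ideal is a ditopological left unosemigroup. -/
theorem reduced_product_ditopological {X Y : Type*} [TopologicalSpace X] [TopologicalSpace Y]
    [Mul X] [Mul Y]
    (hassocX : ∀ a b c : X, a * b * c = a * (b * c))
    (hassocY : ∀ a b c : Y, a * b * c = a * (b * c))
    (hmulX : Continuous fun p : X × X => p.1 * p.2)
    (hmulY : Continuous fun p : Y × Y => p.1 * p.2)
    (lX : X → X) (hlX : Continuous lX) (hunitX : ∀ x : X, lX x * x = x)
    (lY : Y → Y) (hlY : Continuous lY) (hunitY : ∀ y : Y, lY y * y = y)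
    (hdiX : ∀ x : X, LeftDicontAt (· * ·) lX x)
    (hdiY : ∀ y : Y, LeftDicontAt (· * ·) lY y)
    (I : Set X) (hIclosed : IsClosed I)
    (hI : ∀ a b : X, a ∈ I ∨ b ∈ I → a * b ∈ I)
    (hlI : ∀ x ∈ I, lX x ∈ I) :
    ∀ z : RP Y I, @LeftDicontAt (RP Y I) (rpTop I) (rpMul I hI) (rpL I lX lY hlI) z :=
  reduced_product_ditopological_general lX hunitX lY hdiX hdiY I hIclosed hI hlI
end

section
/- Let (S,ρ_S) and (F,ρ_F) be topological right unosemigroups and α:F×S→S a continuous action. Suppose (1) α respects ρ_F (α(ρ_F(f),s)=s for all f,s), (2) α_f(ρ_S(S))=ρ_S(S) for all f∈F, and (3) there is a continuous map (·)⁻¹:F→F with ρ_F(f)=f⁻¹f for all f. Then α is ρ_S-invertible: for every f∈F the restriction of α_f to ρ_S(S) is a bijection of ρ_S(S), and the map α⁻:F×ρ_S(S)→ρ_S(S), (f,s)↦(α_f|ρ_S(S))⁻¹(s), is continuous. -/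
/-- Criterion for `ρ_S`-invertibility of a continuous action: if the action respects
`ρ_F`, maps `ρ_S(S)` onto itself, and `ρ_F(f) = f⁻¹ * f` for a continuous unary
operation on `F`, then each `α_f` restricts to a bijection of `ρ_S(S)` and the
inverse map `α⁻ : F × ρ_S(S) → ρ_S(S)` is continuous. -/
theorem action_rho_invertible {S F : Type*} [TopologicalSpace S] [TopologicalSpace F]
    [Mul S] [Mul F] [Nonempty S]
    (hassocS : ∀ a b c : S, a * b * c = a * (b * c))
    (hassocF : ∀ a b c : F, a * b * c = a * (b * c))
    (hmulS : Continuous fun p : S × S => p.1 * p.2)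
    (hmulF : Continuous fun p : F × F => p.1 * p.2)
    (α : F × S → S) (hαc : Continuous α)
    (hhom : ∀ (f : F) (s t : S), α (f, s * t) = α (f, s) * α (f, t))
    (hact : ∀ (f g : F) (s : S), α (f * g, s) = α (f, α (g, s)))
    (ρS : S → S) (hρS : Continuous ρS) (hunitS : ∀ s : S, s * ρS s = s)
    (ρF : F → F) (hρF : Continuous ρF) (hunitF : ∀ f : F, f * ρF f = f)
    (h1 : ∀ (f : F) (s : S), α (ρF f, s) = s)
    (h2 : ∀ f : F, (fun s => α (f, s)) '' Set.range ρS = Set.range ρS)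
    (inv : F → F) (hinvc : Continuous inv)
    (h3 : ∀ f : F, ρF f = inv f * f) :
    (∀ f : F, Set.BijOn (fun s => α (f, s)) (Set.range ρS) (Set.range ρS)) ∧
    Continuous (fun p : F × (Set.range ρS) =>
      Function.invFunOn (fun s => α (p.1, s)) (Set.range ρS) p.2.1) := by
  have hleft : ∀ (f : F) (s : S), α (inv f, α (f, s)) = s := by
    intro f s
    rw [← hact, ← h3, h1]
  have hinj : ∀ f : F, Set.InjOn (fun s => α (f, s)) (Set.range ρS) := by
    intro f s _ t _ h
    have := congrArg (fun x => α (inv f, x)) h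
    simpa [hleft] using this
  have hbij : ∀ f : F, Set.BijOn (fun s => α (f, s)) (Set.range ρS) (Set.range ρS) := by
    intro f
    refine ⟨fun s hs => ?_, hinj f, fun s hs => ?_⟩
    · rw [← h2 f]; exact Set.mem_image_of_mem _ hs
    · rw [← h2 f] at hs; exact hs
  refine ⟨hbij, ?_⟩
  have key : ∀ (f : F) (s : Set.range ρS),
      Function.invFunOn (fun s => α (f, s)) (Set.range ρS) s.1 = α (inv f, s.1) := by
    intro f ⟨s, hs⟩
    have hmem : s ∈ (fun s => α (f, s)) '' Set.range ρS := by rw [h2]; exact hs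
    obtain ⟨t, ht, hts⟩ := hmem
    have h1' : Function.invFunOn (fun s => α (f, s)) (Set.range ρS) s ∈ Set.range ρS :=
      Function.invFunOn_mem (f := fun s => α (f, s)) ⟨t, ht, hts⟩
    have h2' : α (f, Function.invFunOn (fun s => α (f, s)) (Set.range ρS) s) = s :=
      Function.invFunOn_eq (f := fun s => α (f, s)) ⟨t, ht, hts⟩
    calc Function.invFunOn (fun s => α (f, s)) (Set.range ρS) s
        = α (inv f, α (f, Function.invFunOn (fun s => α (f, s)) (Set.range ρS) s)) :=
          (hleft _ _).symm
      _ = α (inv f, s) := by rw [h2']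
  have : (fun p : F × (Set.range ρS) =>
      Function.invFunOn (fun s => α (p.1, s)) (Set.range ρS) p.2.1) =
      fun p : F × (Set.range ρS) => α (inv p.1, p.2.1) := by
    funext p; exact key p.1 p.2
  rw [this]
  exact hαc.comp ((hinvc.comp continuous_fst).prodMk
    (continuous_subtype_val.comp continuous_snd))
end

section
/- If (X,λ_X) is a ditopological left unosemigroup, then its Hartman–Mycielski extension HM(X), with pointwise multiplication and left unit operation λ_{HM}(f)=λ_X∘f, is a ditopological left unosemigroup. -/
open Topology

/-- The half-open unit interval `[0,1)`, the domain of Hartman–Mycielski functions. -/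
def Ico01 : Set ℝ := Set.Ico (0 : ℝ) 1

/-- `f : [0,1) → X` is a step function: there is a finite set of cut points such that
`f` is constant on each of the resulting intervals (i.e. `f x` depends only on which
cut points lie below `x`). -/
def IsStep {X : Type*} (f : ↥Ico01 → X) : Prop :=
  ∃ s : Finset ℝ, ∀ x y : ↥Ico01, (∀ c ∈ s, (c ≤ x.1 ↔ c ≤ y.1)) → f x = f y

/-- The Hartman–Mycielski extension of `X`: all step functions `[0,1) → X`. -/
def HM (X : Type*) := {f : ↥Ico01 → X // IsStep f}

/-- Pointwise multiplication on `HM X`. -/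
def hmMul {X : Type*} [Mul X] (f g : HM X) : HM X :=
  ⟨fun t => f.1 t * g.1 t, by
    obtain ⟨s, hs⟩ := f.2
    obtain ⟨u, hu⟩ := g.2
    exact ⟨s ∪ u, fun x y h => by
      show f.1 x * g.1 x = f.1 y * g.1 y
      rw [hs x y (fun c hc => h c (Finset.mem_union_left _ hc)),
        hu x y (fun c hc => h c (Finset.mem_union_right _ hc))]⟩⟩

/-- The pointwise extension `f ↦ u ∘ f` of a unary operation `u : X → X` to `HM X`. -/
def hmMap {X : Type*} (u : X → X) (f : HM X) : HM X :=
  ⟨fun t => u (f.1 t), by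
    obtain ⟨s, hs⟩ := f.2
    exact ⟨s, fun x y h => by show u (f.1 x) = u (f.1 y); rw [hs x y h]⟩⟩

/-- The Hartman–Mycielski topology on `HM X`, generated by the sets
`N(a,b,V,ε) = {g : |{t ∈ [a,b) : g(t) ∉ V}| < ε}` for `0 ≤ a < b ≤ 1`,
`V ⊆ X` open and `ε > 0` (`|·|` the Lebesgue measure). -/
def hmTop {X : Type*} [TopologicalSpace X] : TopologicalSpace (HM X) :=
  TopologicalSpace.generateFrom
    {N | ∃ (a b : ℝ) (V : Set X) (ε : ℝ), 0 ≤ a ∧ a < b ∧ b ≤ 1 ∧ IsOpen V ∧ 0 < ε ∧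
      N = {g : HM X | MeasureTheory.volume
        {t : ℝ | ∃ h : t ∈ Ico01, t ∈ Set.Ico a b ∧ g.1 ⟨t, h⟩ ∉ V} < ENNReal.ofReal ε}}

/-!
Dicontinuity at `f` says that a certain filter of sets is finer than `𝓝 f`, so it suffices to
check the sub-basic neighbourhoods `N(a,b,V,ε)` of `f`. Cut `[0,1)` into finitely many intervals
`[p,q)` on which `f` takes a constant value `x`. For `x ∈ V`, dicontinuity of `λ_X` at `x` gives
open `U ∋ x` and `T ∋ λ x` such that `λ z ∈ T`, `w ∈ T ∩ λ(X)` and `w z ∈ U` force `z ∈ V`.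
If `λ ∘ z` and `w` lie in `N(p,q,T,δ)` and `w z` lies in `N(p,q,U,δ)` on every interval, then
`z(t) ∉ V` only where `f(t) ∉ V` or on a set of measure `< 3δ` per interval, and a small `δ`
keeps the total below `ε`.
-/

open Filter Set MeasureTheory
open scoped ENNReal

section Dicontinuity

variable {S : Type*} [TopologicalSpace S] (mul : S → S → S) (l : S → S) (x : S)

def leftDicontFilter : Filter S where
  sets := {O | ∃ U ∈ 𝓝 x, ∃ W ∈ 𝓝[range l] (l x),
    W ⊆ range l ∧ {z | l z ∈ W ∧ ∃ w ∈ W, mul w z ∈ U} ⊆ O}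
  univ_sets := ⟨univ, univ_mem, range l, self_mem_nhdsWithin, subset_rfl, subset_univ _⟩
  sets_of_superset := by
    rintro O O' ⟨U, hU, W, hW, hWl, hO⟩ hOO'
    exact ⟨U, hU, W, hW, hWl, hO.trans hOO'⟩
  inter_sets := by
    rintro O₁ O₂ ⟨U₁, hU₁, W₁, hW₁, hW₁l, hO₁⟩ ⟨U₂, hU₂, W₂, hW₂, -, hO₂⟩
    refine ⟨U₁ ∩ U₂, inter_mem hU₁ hU₂, W₁ ∩ W₂, inter_mem hW₁ hW₂,
      inter_subset_left.trans hW₁l, ?_⟩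
    rintro z ⟨hlz, w, hw, hwz⟩
    exact ⟨hO₁ ⟨hlz.1, w, hw.1, hwz.1⟩, hO₂ ⟨hlz.2, w, hw.2, hwz.2⟩⟩

theorem leftDicontAt_iff_le_nhds :
    LeftDicontAt mul l x ↔ leftDicontFilter mul l x ≤ 𝓝 x :=
  Iff.rfl

variable {mul l x}

theorem leftDicontAt_of_subbasis {g : Set (Set S)} (hg : ‹TopologicalSpace S› = .generateFrom g)
    (h : ∀ O ∈ g, x ∈ O → O ∈ leftDicontFilter mul l x) : LeftDicontAt mul l x := by
  have hnhds : 𝓝 x = ⨅ s ∈ {s | x ∈ s ∧ s ∈ g}, 𝓟 s := by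
    rw [hg]
    exact TopologicalSpace.nhds_generateFrom
  rw [leftDicontAt_iff_le_nhds, hnhds]
  exact le_iInf₂ fun O ⟨hxO, hO⟩ => le_principal_iff.mpr (h O hO hxO)

theorem LeftDicontAt.exists_isOpen (h : LeftDicontAt mul l x) {O : Set S} (hO : O ∈ 𝓝 x) :
    ∃ U T : Set S, IsOpen U ∧ IsOpen T ∧ x ∈ U ∧ l x ∈ T ∧
      ∀ z w, l z ∈ T → w ∈ T ∩ range l → mul w z ∈ U → z ∈ O := by
  obtain ⟨U, hU, W, hW, hWl, hO⟩ := h O hO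
  obtain ⟨U', hU'U, hU', hxU'⟩ := mem_nhds_iff.mp hU
  obtain ⟨T, hT, hlxT, hTW⟩ := mem_nhdsWithin.mp hW
  exact ⟨U', T, hU', hT, hxU', hlxT, fun z w hlz hw hwz =>
    hO ⟨hTW ⟨hlz, z, rfl⟩, w, hTW hw, hU'U hwz⟩⟩

end Dicontinuity

theorem ENNReal.exists_pos_add_mul_ofReal_lt {m c e : ℝ≥0∞} (hc : c ≠ ⊤) (h : m < e) :
    ∃ δ : ℝ, 0 < δ ∧ m + c * ENNReal.ofReal δ < e := by
  have hcont : Continuous fun δ : ℝ => m + c * ENNReal.ofReal δ :=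
    continuous_const.add ((ENNReal.continuous_const_mul hc).comp ENNReal.continuous_ofReal)
  have hlim : Tendsto (fun δ : ℝ => m + c * ENNReal.ofReal δ) (𝓝[>] 0) (𝓝 m) := by
    simpa using (hcont.tendsto 0).mono_left nhdsWithin_le_nhds
  exact ((hlim.eventually (gt_mem_nhds h)).and self_mem_nhdsWithin).exists.imp
    fun δ hδ => ⟨hδ.2, hδ.1⟩

theorem Finset.exists_gap_mem_Ico {α : Type*} [LinearOrder α] (s : Finset α) {a b t : α}
    (ht : t ∈ Set.Ico a b) :
    ∃ p ∈ insert a s, ∃ q ∈ insert b s,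
      a ≤ p ∧ t ∈ Set.Ico p q ∧ q ≤ b ∧ ∀ c ∈ s, c ∉ Set.Ioo p q := by
  set P := insert a (s.filter (· ≤ t))
  set Q := insert b (s.filter (t < ·))
  have hP : P.Nonempty := insert_nonempty _ _
  have hQ : Q.Nonempty := insert_nonempty _ _
  refine ⟨P.max' hP, insert_subset_insert _ (filter_subset _ _) (P.max'_mem hP),
    Q.min' hQ, insert_subset_insert _ (filter_subset _ _) (Q.min'_mem hQ),
    P.le_max' a (mem_insert_self _ _), ⟨?_, ?_⟩, Q.min'_le b (mem_insert_self _ _), ?_⟩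
  · refine P.max'_le hP t fun c hc => ?_
    rcases mem_insert.mp hc with rfl | hc
    exacts [ht.1, (mem_filter.mp hc).2]
  · refine (Q.lt_min'_iff hQ).mpr fun c hc => ?_
    rcases mem_insert.mp hc with rfl | hc
    exacts [ht.2, (mem_filter.mp hc).2]
  · rintro c hc ⟨hpc, hcq⟩
    rcases le_or_gt c t with hct | htc
    · exact hpc.not_ge (P.le_max' c (mem_insert_of_mem (mem_filter.mpr ⟨hc, hct⟩)))
    · exact hcq.not_ge (Q.min'_le c (mem_insert_of_mem (mem_filter.mpr ⟨hc, htc⟩)))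

theorem IsStep.exists_Ico_cover {X : Type*} {f : ↥Ico01 → X} (hf : IsStep f) :
    ∃ (I : Finset (ℝ × ℝ)) (x : ℝ × ℝ → X), (∀ i ∈ I, 0 ≤ i.1 ∧ i.1 < i.2 ∧ i.2 ≤ 1) ∧
      (∀ t : Ico01, ∃ i ∈ I, t.1 ∈ Ico i.1 i.2) ∧
      ∀ i ∈ I, ∀ t : Ico01, t.1 ∈ Ico i.1 i.2 → f t = x i := by
  obtain ⟨s, hs⟩ := hf
  let I := (insert 0 s ×ˢ insert 1 s).filter
    fun i : ℝ × ℝ => 0 ≤ i.1 ∧ i.1 < i.2 ∧ i.2 ≤ 1 ∧ ∀ c ∈ s, c ∉ Ioo i.1 i.2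
  have hconst : ∀ i ∈ I, ∃ y : X, ∀ t : Ico01, t.1 ∈ Ico i.1 i.2 → f t = y := by
    intro i hi
    obtain ⟨-, h0, hi12, h1, hgap⟩ := Finset.mem_filter.mp hi
    refine ⟨f ⟨i.1, h0, hi12.trans_le h1⟩, fun t ht => hs _ _ fun c hc => ?_⟩
    by_cases hci : c ≤ i.1
    · exact iff_of_true (hci.trans ht.1) hci
    · have hqc : i.2 ≤ c := not_lt.mp fun hcq => hgap c hc ⟨not_le.mp hci, hcq⟩
      exact iff_of_false (ht.2.trans_le hqc).not_ge hci
  have : Nonempty X := ⟨f ⟨0, le_rfl, zero_lt_one⟩⟩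
  choose! x hx using hconst
  refine ⟨I, x, fun i hi => ?_, fun t => ?_, hx⟩
  · obtain ⟨-, h0, hi12, h1, -⟩ := Finset.mem_filter.mp hi
    exact ⟨h0, hi12, h1⟩
  · obtain ⟨p, hp, q, hq, h0p, htpq, hq1, hgap⟩ := s.exists_gap_mem_Ico t.2
    exact ⟨(p, q), Finset.mem_filter.mpr ⟨Finset.mem_product.mpr ⟨hp, hq⟩,
      h0p, htpq.1.trans_lt htpq.2, hq1, hgap⟩, htpq⟩

section HartmanMycielski

variable {X : Type*}

def hmBadSet (a b : ℝ) (V : Set X) (g : ↥Ico01 → X) : Set ℝ :=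
  {t | ∃ h : t ∈ Ico01, t ∈ Ico a b ∧ g ⟨t, h⟩ ∉ V}

def hmSubbasic (a b : ℝ) (V : Set X) (ε : ℝ) : Set (HM X) :=
  {g | volume (hmBadSet a b V g.1) < ENNReal.ofReal ε}

theorem hmBadSet_subset [Mul X] {l : X → X} {f z w : ↥Ico01 → X} {a b : ℝ} {V : Set X}
    {I : Finset (ℝ × ℝ)} {x : ℝ × ℝ → X} {U T : X → Set X}
    (hcover : ∀ t : Ico01, ∃ i ∈ I, t.1 ∈ Ico i.1 i.2)
    (hconst : ∀ i ∈ I, ∀ t : Ico01, t.1 ∈ Ico i.1 i.2 → f t = x i)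
    (hkey : ∀ y ∈ V, ∀ z w, l z ∈ T y → w ∈ T y ∩ range l → w * z ∈ U y → z ∈ V)
    (hw : ∀ t, w t ∈ range l) :
    hmBadSet a b V z ⊆ hmBadSet a b V f ∪ ⋃ i ∈ I,
      (hmBadSet i.1 i.2 (T (x i)) (fun t => l (z t)) ∪ hmBadSet i.1 i.2 (T (x i)) w ∪
        hmBadSet i.1 i.2 (U (x i)) (fun t => w t * z t)) := by
  rintro t ⟨ht, htab, hzt⟩
  obtain ⟨i, hi, hti⟩ := hcover ⟨t, ht⟩
  by_cases hft : f ⟨t, ht⟩ ∈ V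
  · rw [hconst i hi _ hti] at hft
    refine Or.inr (mem_biUnion hi ?_)
    by_contra hgood
    simp only [hmBadSet, mem_union, mem_ofPred_eq, not_or, not_exists, not_and, not_not] at hgood
    exact hzt (hkey _ hft _ _ (hgood.1.1 ht hti) ⟨hgood.1.2 ht hti, hw _⟩ (hgood.2 ht hti))
  · exact Or.inl ⟨ht, htab, hft⟩

variable [TopologicalSpace X]

attribute [local instance] hmTop

theorem isOpen_hmSubbasic {a b ε : ℝ} {V : Set X} (ha : 0 ≤ a) (hab : a < b) (hb : b ≤ 1)
    (hV : IsOpen V) (hε : 0 < ε) : IsOpen (hmSubbasic a b V ε) :=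
  .basic _ ⟨a, b, V, ε, ha, hab, hb, hV, hε, rfl⟩

theorem hmSubbasic_mem_nhds {a b ε : ℝ} {V : Set X} {g : HM X} (hab : 0 ≤ a ∧ a < b ∧ b ≤ 1)
    (hV : IsOpen V) (hε : 0 < ε) (hg : ∀ t : Ico01, t.1 ∈ Ico a b → g.1 t ∈ V) :
    hmSubbasic a b V ε ∈ 𝓝 g := by
  refine (isOpen_hmSubbasic hab.1 hab.2.1 hab.2.2 hV hε).mem_nhds ?_
  have hbad : hmBadSet a b V g.1 = ∅ :=
    eq_empty_of_forall_notMem fun t ⟨ht, htab, hgt⟩ => hgt (hg ⟨t, ht⟩ htab)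
  simpa [hmSubbasic, hbad] using hε

theorem hmSubbasic_mem_leftDicontFilter [Mul X] {l : X → X}
    (hdi : ∀ x, LeftDicontAt (· * ·) l x) {f : HM X} {a b ε : ℝ} {V : Set X} (hV : IsOpen V)
    (hf : f ∈ hmSubbasic a b V ε) : hmSubbasic a b V ε ∈ leftDicontFilter hmMul (hmMap l) f := by
  obtain ⟨I, x, hI, hcover, hconst⟩ := f.2.exists_Ico_cover
  have hnbhd : ∀ y : X, ∃ U T : Set X, IsOpen U ∧ IsOpen T ∧ y ∈ U ∧ l y ∈ T ∧
      (y ∈ V → ∀ z w, l z ∈ T → w ∈ T ∩ range l → w * z ∈ U → z ∈ V) := by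
    intro y
    by_cases hy : y ∈ V
    · obtain ⟨U, T, hU, hT, hyU, hyT, hkey⟩ := (hdi y).exists_isOpen (hV.mem_nhds hy)
      exact ⟨U, T, hU, hT, hyU, hyT, fun _ => hkey⟩
    · exact ⟨univ, univ, isOpen_univ, isOpen_univ, trivial, trivial, fun h => absurd h hy⟩
  choose U T hU hT hxU hxT hkey using hnbhd
  obtain ⟨δ, hδ, hsmall⟩ :=
    ENNReal.exists_pos_add_mul_ofReal_lt (c := I.card * 3) (by finiteness) hf
  have hU𝓝 : ⋂ i ∈ I, hmSubbasic i.1 i.2 (U (x i)) δ ∈ 𝓝 f :=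
    (biInter_finset_mem I).mpr fun i hi => hmSubbasic_mem_nhds (hI i hi) (hU _) hδ
      fun t ht => hconst i hi t ht ▸ hxU _
  have hT𝓝 : ⋂ i ∈ I, hmSubbasic i.1 i.2 (T (x i)) δ ∈ 𝓝 (hmMap l f) :=
    (biInter_finset_mem I).mpr fun i hi => hmSubbasic_mem_nhds (hI i hi) (hT _) hδ
      fun t ht => hconst i hi t ht ▸ hxT _
  refine ⟨_, hU𝓝, _ ∩ range (hmMap l),
    inter_mem (mem_nhdsWithin_of_mem_nhds hT𝓝) self_mem_nhdsWithin, inter_subset_right, ?_⟩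
  rintro z ⟨⟨hlz, -⟩, w, ⟨hw, g, rfl⟩, hwz⟩
  simp only [mem_iInter₂] at hlz hw hwz
  calc volume (hmBadSet a b V z.1)
      ≤ volume (hmBadSet a b V f.1) +
          ∑ i ∈ I, (ENNReal.ofReal δ + ENNReal.ofReal δ + ENNReal.ofReal δ) := by
        refine (measure_mono (hmBadSet_subset hcover hconst hkey
          fun t => ⟨g.1 t, rfl⟩)).trans ((measure_union_le _ _).trans (add_le_add_right ?_ _))
        refine (measure_biUnion_finset_le _ _).trans (Finset.sum_le_sum fun i hi => ?_)
        exact (measure_union_le _ _).trans (add_le_add ((measure_union_le _ _).trans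
          (add_le_add (hlz i hi).le (hw i hi).le)) (hwz i hi).le)
    _ = volume (hmBadSet a b V f.1) + I.card * 3 * ENNReal.ofReal δ := by
        rw [Finset.sum_const, nsmul_eq_mul]
        ring
    _ < ENNReal.ofReal ε := hsmall

end HartmanMycielski

theorem hartmanMycielski_ditopological_general {X : Type*} [TopologicalSpace X] [Mul X]
    (l : X → X)
    (hdi : ∀ x : X, LeftDicontAt (· * ·) l x) :
    ∀ f : HM X, @LeftDicontAt (HM X) hmTop hmMul (hmMap l) f := by
  intro f
  let _ : TopologicalSpace (HM X) := hmTop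
  refine leftDicontAt_of_subbasis rfl ?_
  rintro _ ⟨a, b, V, ε, -, -, -, hV, -, rfl⟩ hfO
  exact hmSubbasic_mem_leftDicontFilter hdi hV hfO

/-- The Hartman–Mycielski extension of a ditopological left unosemigroup is a
ditopological left unosemigroup. -/
theorem hartmanMycielski_ditopological {X : Type*} [TopologicalSpace X] [Mul X]
    (hassoc : ∀ a b c : X, a * b * c = a * (b * c))
    (hmul : Continuous fun p : X × X => p.1 * p.2)
    (l : X → X) (hl : Continuous l)
    (hunit : ∀ x : X, l x * x = x)
    (hdi : ∀ x : X, LeftDicontAt (· * ·) l x) :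
    ∀ f : HM X, @LeftDicontAt (HM X) hmTop hmMul (hmMap l) f :=
  hartmanMycielski_ditopological_general l hdi
end
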